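/- Let M be a finite loopless matroid on a nonempty ground set, and let M_1, ..., M_l be the restrictions of M to its connected components. Then gamma(M) = max_i gamma(M_i), where gamma(N) = max over nonempty subsets A of the ground set of N of the ceiling of |A| / rank(A). -/

import Mathlib

/-!
Strong circuit elimination makes "lying on a common circuit" transitive, so every circuit lies
inside a connected component `K` or avoids it. Hence maximum independent subsets of `A ∩ K` and
`A \ K` have independent union, and `r(A ∩ K) + r(A \ K) ≤ r(A)`. If every component has
`γ ≤ m`, then `|A| ≤ m · r(A)` holds for `A` inside one component, and, splitting off one
component at a time, for every `A`; as `r(A) ≥ 1` for nonempty `A` in a loopless matroid, this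
says `⌈|A| / r(A)⌉ ≤ m`. Conversely, `γ` does not increase under restriction.
-/

open Set Matroid

variable {α : Type*}

/-- A circuit of a matroid: a minimally dependent subset of the ground set. -/
def Matroid.IsCircuit' (M : Matroid α) (C : Set α) : Prop :=
  C ⊆ M.E ∧ ¬ M.Indep C ∧ ∀ D ⊂ C, M.Indep D

/-- A matroid is loopless if no single element forms a circuit, i.e. every
singleton of the ground set is independent. -/
def Matroid.Loopless' (M : Matroid α) : Prop := ∀ e ∈ M.E, M.Indep {e}

/-- The rank of a set `A` in a matroid `M`: the maximum size of an independent
subset of `A`. -/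
noncomputable def Matroid.rk' (M : Matroid α) (A : Set α) : ℕ :=
  sSup {n | ∃ I, I ⊆ A ∧ M.Indep I ∧ I.ncard = n}

/-- `c(M)`: the maximum size of a circuit of `M`. -/
noncomputable def Matroid.cMax (M : Matroid α) : ℕ :=
  sSup {n | ∃ C, M.IsCircuit' C ∧ C.ncard = n}

/-- `γ(M) = max{⌈|A| / rank(A)⌉ : A a nonempty subset of the ground set}`. -/
noncomputable def Matroid.gamma (M : Matroid α) : ℕ :=
  sSup {n | ∃ A ⊆ M.E, A.Nonempty ∧ n = ⌈(A.ncard : ℚ) / (M.rk' A : ℚ)⌉₊}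

/-- The connected component of an element `e`: the set of `f` with `f = e` or
such that some circuit contains both `e` and `f`. -/
def Matroid.component (M : Matroid α) (e : α) : Set α :=
  {f | f = e ∨ ∃ C, M.IsCircuit' C ∧ e ∈ C ∧ f ∈ C}

namespace Nat

variable {𝕜 : Type*} [Semifield 𝕜] [LinearOrder 𝕜] [IsStrictOrderedRing 𝕜] [FloorSemiring 𝕜]

lemma ceil_div_le_iff_le_mul {a r m : ℕ} (hr : 0 < r) :
    ⌈(a : 𝕜) / r⌉₊ ≤ m ↔ a ≤ m * r := by
  rw [Nat.ceil_le, div_le_iff₀ (by exact_mod_cast hr)]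
  exact_mod_cast Iff.rfl

lemma ceil_div_le_self (a r : ℕ) : ⌈(a : 𝕜) / r⌉₊ ≤ a := by
  obtain rfl | hr := r.eq_zero_or_pos
  · simp
  · exact (ceil_div_le_iff_le_mul hr).2 (Nat.le_mul_of_pos_right a hr)

end Nat

namespace Matroid

variable {M : Matroid α} {A C C₁ C₂ I I₁ I₂ K X : Set α} {e f g : α}

lemma isCircuit'_iff : M.IsCircuit' C ↔ M.IsCircuit C := by
  rw [isCircuit_iff_forall_ssubset, Dep, IsCircuit']
  tauto

/-- Two eliminations produce a circuit through `g` that meets `C₁` and has fewer elements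
outside `C₁` than `C₂`. -/
lemma IsCircuit.exists_isCircuit_mem_mem [M.Finitary] (hC₁ : M.IsCircuit C₁)
    (hC₂ : M.IsCircuit C₂) (hmeet : (C₁ ∩ C₂).Nonempty) (he : e ∈ C₁) (hg : g ∈ C₂) :
    ∃ C, M.IsCircuit C ∧ e ∈ C ∧ g ∈ C := by
  induction hn : (C₂ \ C₁).ncard using Nat.strong_induction_on generalizing C₂ with
  | _ n ih =>
  by_cases hgC₁ : g ∈ C₁
  · exact ⟨C₁, hC₁, he, hgC₁⟩
  by_cases heC₂ : e ∈ C₂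
  · exact ⟨C₂, hC₂, heC₂, hg⟩
  obtain ⟨f, hfC₁, hfC₂⟩ := hmeet
  obtain ⟨C₃, hC₃ss, hC₃, heC₃⟩ := hC₁.strong_elimination hC₂ hfC₁ hfC₂ he heC₂
  by_cases hgC₃ : g ∈ C₃
  · exact ⟨C₃, hC₃, heC₃, hgC₃⟩
  obtain ⟨x, hxC₃, hxC₁⟩ : ∃ x ∈ C₃, x ∉ C₁ := not_subset.1 fun h ↦ by
    have hfC₃ : f ∈ C₃ := (hC₃.eq_of_subset_isCircuit hC₁ h).symm ▸ hfC₁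
    exact (hC₃ss hfC₃).2 rfl
  have hxC₂ : x ∈ C₂ := (hC₃ss hxC₃).1.resolve_left hxC₁
  obtain ⟨C₄, hC₄ss, hC₄, hgC₄⟩ := hC₂.strong_elimination hC₃ hxC₂ hxC₃ hg hgC₃
  obtain ⟨y, hyC₄, hyC₂⟩ : ∃ y ∈ C₄, y ∉ C₂ := not_subset.1 fun h ↦ by
    have hxC₄ : x ∈ C₄ := (hC₄.eq_of_subset_isCircuit hC₂ h).symm ▸ hxC₂
    exact (hC₄ss hxC₄).2 rfl
  have hyC₁ : y ∈ C₁ :=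
    ((hC₃ss ((hC₄ss hyC₄).1.resolve_left hyC₂)).1).resolve_right hyC₂
  have hlt : C₄ \ C₁ ⊂ C₂ \ C₁ := by
    refine ssubset_of_subset_of_ne (fun z ⟨hzC₄, hzC₁⟩ ↦ ⟨?_, hzC₁⟩) fun h ↦ ?_
    · obtain hzC₂ | hzC₃ := (hC₄ss hzC₄).1
      · exact hzC₂
      · exact (hC₃ss hzC₃).1.resolve_left hzC₁
    · have hx : x ∈ C₄ \ C₁ := h ▸ ⟨hxC₂, hxC₁⟩
      exact (hC₄ss hx.1).2 rfl
  exact ih _ (hn ▸ ncard_lt_ncard hlt hC₂.finite.sdiff) hC₄ ⟨y, hyC₁, hyC₄⟩ hgC₄ rfl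

lemma mem_component_iff : f ∈ M.component e ↔ f = e ∨ ∃ C, M.IsCircuit C ∧ e ∈ C ∧ f ∈ C := by
  simp only [component, mem_ofPred_eq, isCircuit'_iff]

lemma component_subset_ground (he : e ∈ M.E) : M.component e ⊆ M.E := by
  rintro f (rfl | ⟨C, hC, -, hfC⟩)
  · exact he
  · exact hC.1 hfC

def IsSeparator (M : Matroid α) (K : Set α) : Prop :=
  ∀ C, M.IsCircuit C → C ⊆ K ∨ Disjoint C K

lemma isSeparator_component [M.Finitary] (e : α) : M.IsSeparator (M.component e) := by
  refine fun C hC ↦ or_iff_not_imp_right.2 fun hmeet g hg ↦ mem_component_iff.2 (Or.inr ?_)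
  obtain ⟨f, hfC, hf⟩ := not_disjoint_iff.1 hmeet
  obtain rfl | ⟨C', hC', heC', hfC'⟩ := mem_component_iff.1 hf
  · exact ⟨C, hC, hfC, hg⟩
  · exact hC'.exists_isCircuit_mem_mem hC ⟨f, hfC', hfC⟩ heC' hg

lemma IsSeparator.indep_union (hK : M.IsSeparator K) (hI₁ : M.Indep I₁) (hI₂ : M.Indep I₂)
    (h₁ : I₁ ⊆ K) (h₂ : Disjoint I₂ K) : M.Indep (I₁ ∪ I₂) := by
  by_contra hdep
  obtain ⟨C, hCI, hC⟩ := ((not_indep_iff (union_subset hI₁.subset_ground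
    hI₂.subset_ground)).1 hdep).exists_isCircuit_subset
  obtain hCK | hCK := hK C hC
  · refine hC.not_indep (hI₁.subset fun x hx ↦ (hCI hx).resolve_right fun hx₂ ↦ ?_)
    exact disjoint_left.1 h₂ hx₂ (hCK hx)
  · refine hC.not_indep (hI₂.subset fun x hx ↦ (hCI hx).resolve_left fun hx₁ ↦ ?_)
    exact disjoint_left.1 hCK hx (h₁ hx₁)

lemma bddAbove_rk'_set (hA : A.Finite) :
    BddAbove {n | ∃ I, I ⊆ A ∧ M.Indep I ∧ I.ncard = n} :=
  ⟨A.ncard, by rintro _ ⟨I, hIA, -, rfl⟩; exact ncard_le_ncard hIA hA⟩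

lemma Indep.ncard_le_rk' (hA : A.Finite) (hI : M.Indep I) (hIA : I ⊆ A) :
    I.ncard ≤ M.rk' A :=
  le_csSup (bddAbove_rk'_set hA) ⟨I, hIA, hI, rfl⟩

lemma exists_indep_ncard_eq_rk' (hA : A.Finite) : ∃ I ⊆ A, M.Indep I ∧ I.ncard = M.rk' A :=
  Nat.sSup_mem (s := {n | ∃ I, I ⊆ A ∧ M.Indep I ∧ I.ncard = n})
    ⟨0, ∅, empty_subset A, M.empty_indep, ncard_empty α⟩ (bddAbove_rk'_set hA)

lemma one_le_rk' (hL : M.Loopless') (hA : A.Finite) (hAE : A ⊆ M.E) (hne : A.Nonempty) :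
    1 ≤ M.rk' A := by
  obtain ⟨a, ha⟩ := hne
  simpa using (hL a (hAE ha)).ncard_le_rk' hA (singleton_subset_iff.2 ha)

lemma rk'_restrict (hAX : A ⊆ X) : (M ↾ X).rk' A = M.rk' A := by
  simp only [rk', restrict_indep_iff]
  congr! 3 with n
  exact exists_congr fun I ↦ and_congr_right fun hIA ↦ by rw [and_iff_left (hIA.trans hAX)]

lemma IsSeparator.rk'_inter_add_rk'_sdiff_le (hK : M.IsSeparator K) (hA : A.Finite) :
    M.rk' (A ∩ K) + M.rk' (A \ K) ≤ M.rk' A := by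
  obtain ⟨I₁, hI₁A, hI₁, hI₁card⟩ := exists_indep_ncard_eq_rk' (M := M) (hA.inter_of_left K)
  obtain ⟨I₂, hI₂A, hI₂, hI₂card⟩ := exists_indep_ncard_eq_rk' (M := M) (hA.sdiff (t := K))
  have hI₂K : Disjoint I₂ K := disjoint_of_subset_left hI₂A disjoint_sdiff_left
  have hI₁I₂ : Disjoint I₁ I₂ := disjoint_of_subset_left (hI₁A.trans inter_subset_right) hI₂K.symm
  rw [← hI₁card, ← hI₂card, ← ncard_union_eq hI₁I₂ (hA.subset (hI₁A.trans inter_subset_left))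
    (hA.subset (hI₂A.trans sdiff_subset))]
  exact (hK.indep_union hI₁ hI₂ (hI₁A.trans inter_subset_right) hI₂K).ncard_le_rk' hA
    (union_subset (hI₁A.trans inter_subset_left) (hI₂A.trans sdiff_subset))

lemma le_gamma [M.Finite] (hA : A ⊆ M.E) (hne : A.Nonempty) :
    ⌈(A.ncard : ℚ) / (M.rk' A : ℚ)⌉₊ ≤ M.gamma := by
  refine le_csSup ⟨M.E.ncard, ?_⟩ ⟨A, hA, hne, rfl⟩
  rintro _ ⟨B, hB, -, rfl⟩
  exact (Nat.ceil_div_le_self _ _).trans (ncard_le_ncard hB M.ground_finite)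

lemma gamma_restrict_le [M.Finite] (hX : X ⊆ M.E) : (M ↾ X).gamma ≤ M.gamma := by
  refine csSup_le' ?_
  rintro _ ⟨A, hA, hne, rfl⟩
  rw [rk'_restrict (X := X) hA]
  exact le_gamma (hA.trans hX) hne

lemma ncard_le_mul_rk' [M.Finite] (hL : M.Loopless') {m : ℕ}
    (hm : ∀ e ∈ M.E, (M ↾ M.component e).gamma ≤ m) (hA : A ⊆ M.E) :
    A.ncard ≤ m * M.rk' A := by
  induction hn : A.ncard using Nat.strong_induction_on generalizing A with
  | _ n ih =>
  subst hn
  obtain rfl | ⟨e, heA⟩ := A.eq_empty_or_nonempty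
  · simp
  have hAfin : A.Finite := M.set_finite A hA
  set K := M.component e
  by_cases hAK : A ⊆ K
  · have : (M ↾ K).Finite :=
      restrict_finite (M.ground_finite.subset (component_subset_ground (hA heA)))
    have hγ := le_gamma (M := M ↾ K) hAK ⟨e, heA⟩
    rw [rk'_restrict hAK, Nat.ceil_div_le_iff_le_mul (one_le_rk' hL hAfin hA ⟨e, heA⟩)] at hγ
    exact hγ.trans (Nat.mul_le_mul_right _ (hm e (hA heA)))
  · have h₁ : (A ∩ K).ncard < A.ncard := ncard_lt_ncard (inter_ssubset_left_iff.2 hAK) hAfin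
    have h₂ : (A \ K).ncard < A.ncard :=
      ncard_lt_ncard (sdiff_ssubset_left_iff.2 ⟨e, heA, mem_component_iff.2 (Or.inl rfl)⟩) hAfin
    calc A.ncard = (A ∩ K).ncard + (A \ K).ncard :=
          (ncard_inter_add_ncard_sdiff_eq_ncard A K hAfin).symm
      _ ≤ m * M.rk' (A ∩ K) + m * M.rk' (A \ K) :=
          add_le_add (ih _ h₁ (inter_subset_left.trans hA) rfl)
            (ih _ h₂ (sdiff_subset.trans hA) rfl)
      _ ≤ m * M.rk' A := by
          rw [← mul_add]
          exact Nat.mul_le_mul_left _ ((isSeparator_component e).rk'_inter_add_rk'_sdiff_le hAfin)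

lemma gamma_le_of_forall_component_gamma_le [M.Finite] (hL : M.Loopless') {m : ℕ}
    (hm : ∀ e ∈ M.E, (M ↾ M.component e).gamma ≤ m) : M.gamma ≤ m := by
  refine csSup_le' ?_
  rintro _ ⟨A, hA, hne, rfl⟩
  exact (Nat.ceil_div_le_iff_le_mul (one_le_rk' hL (M.set_finite A hA) hA hne)).2
    (ncard_le_mul_rk' hL hm hA)

end Matroid

theorem gamma_eq_sSup_components_general (M : Matroid α) [M.Finite]
    (hLoopless : M.Loopless') :
    M.gamma = sSup {n | ∃ e ∈ M.E, n = (M ↾ M.component e).gamma} := by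
  have hcomponent_le : ∀ n ∈ {n | ∃ e ∈ M.E, n = (M ↾ M.component e).gamma}, n ≤ M.gamma := by
    rintro _ ⟨e, he, rfl⟩
    exact gamma_restrict_le (component_subset_ground he)
  exact le_antisymm (gamma_le_of_forall_component_gamma_le hLoopless
    fun e he ↦ le_csSup ⟨_, hcomponent_le⟩ ⟨e, he, rfl⟩) (csSup_le' hcomponent_le)

/-- For a finite loopless matroid `M` on a nonempty ground set, `γ(M)` equals the
maximum, over the connected components of `M`, of `γ` of the restriction of `M`
to that component. -/
theorem gamma_eq_sSup_components (M : Matroid α) [M.Finite]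
    (hLoopless : M.Loopless') (hne : M.E.Nonempty) :
    M.gamma = sSup {n | ∃ e ∈ M.E, n = (M ↾ M.component e).gamma} :=
  gamma_eq_sSup_components_general M hLoopless
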